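/- Let s, u ∈ ℂ with s ≠ 0, let A = [[s, 1], [0, s⁻¹]], B = [[s, 0], [−u, s⁻¹]] in SL₂(ℂ), W = B·A⁻¹·B⁻¹·A, W' = A·B⁻¹·A⁻¹·B, and z = 2 + (2 − s² − s⁻²)u + u². Then for every integer n, the trace of (W')^n · W^n equals 2 + u²·(s² + s⁻² + 2)·(s² + s⁻² − 2 − u)·S_{n−1}(z)². -/

import Mathlib

/-!
The words `w` and its reverse `w'` are commutators, so `W` and `W'` have determinant one, and a
direct computation shows that both have trace `z`. For a `2 × 2` matrix `M` with `det M = 1` and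
`tr M = t`, Cayley–Hamilton gives `M² = t M - 1`, whence `M ^ n = S_{n-1}(t) M - S_{n-2}(t)` for
every `n ∈ ℤ`. Expanding `W' ^ n * W ^ n` this way and using the identity
`S_{n-1}² - t S_{n-1} S_{n-2} + S_{n-2}² = 1` gives
`tr (W' ^ n * W ^ n) = 2 + (tr (W' * W) - 2) S_{n-1}(z)²`, and `tr (W' * W) - 2` is computed
directly.
-/

open Matrix Polynomial

namespace Polynomial.Chebyshev

variable {R : Type*} [CommRing R]

theorem eq_eval_S_of_recurrence {z : R} {S : ℤ → R} (h0 : S 0 = 1) (h1 : S 1 = z)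
    (hrec : ∀ k, S k = z * S (k - 1) - S (k - 2)) (n : ℤ) : S n = (Chebyshev.S R n).eval z := by
  induction n using Chebyshev.induct with
  | zero => simp [h0]
  | one => simp [h1]
  | add_two n h₁ h₀ =>
    rw [hrec, add_sub_assoc, add_sub_cancel_right, S_add_two, eval_sub, eval_mul, eval_X, ← h₁,
      ← h₀]
    norm_num
  | neg_add_one n h₀ h₁ =>
    have h := hrec (-n + 1)
    rw [add_sub_cancel_right, show -(n : ℤ) + 1 - 2 = -n - 1 by ring] at h
    rw [S_sub_one, eval_sub, eval_mul, eval_X, ← h₀, ← h₁]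
    linear_combination h

end Polynomial.Chebyshev

namespace Matrix

variable {R : Type*} [CommRing R] {M N : Matrix (Fin 2) (Fin 2) R}

theorem mul_self_fin_two (M : Matrix (Fin 2) (Fin 2) R) : M * M = M.trace • M - M.det • 1 := by
  rw [eta_fin_two M]
  ext i j
  fin_cases i <;> fin_cases j <;> simp <;> ring

theorem inv_eq_trace_smul_one_sub (h : M.det = 1) : M⁻¹ = M.trace • 1 - M := by
  refine inv_eq_right_inv ?_
  rw [mul_sub, mul_smul_comm, mul_one, mul_self_fin_two, h, one_smul, sub_sub_cancel]

theorem zpow_eq_eval_chebyshev_S (h : M.det = 1) (n : ℤ) :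
    M ^ n =
      (Chebyshev.S R (n - 1)).eval M.trace • M - (Chebyshev.S R (n - 2)).eval M.trace • 1 := by
  have hM : M * M = M.trace • M - 1 := by rw [mul_self_fin_two, h, one_smul]
  have hu : IsUnit M.det := h ▸ isUnit_one
  induction n using Int.induction_on with
  | zero => simp
  | succ n ih =>
    rw [zpow_add_one hu, ih, show (n : ℤ) + 1 - 1 = n by ring,
      show (n : ℤ) + 1 - 2 = n - 1 by ring, Chebyshev.S_eq R n]
    simp only [sub_mul, smul_mul_assoc, one_mul, hM, eval_sub, eval_mul, eval_X]
    module
  | pred n ih =>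
    rw [zpow_sub_one hu, ih, inv_eq_trace_smul_one_sub h, Chebyshev.S_sub_two R (-n - 1),
      show -(n : ℤ) - 1 - 1 = -n - 2 by ring]
    simp only [sub_mul, mul_sub, smul_mul_assoc, mul_smul_comm, one_mul, mul_one, hM, eval_sub,
      eval_mul, eval_X]
    module

theorem trace_zpow_mul_zpow (hM : M.det = 1) (hN : N.det = 1) (htr : N.trace = M.trace) (n : ℤ) :
    (N ^ n * M ^ n).trace =
      2 + ((N * M).trace - 2) * (Chebyshev.S R (n - 1)).eval M.trace ^ 2 := by
  have cassini := congrArg (eval M.trace) (Chebyshev.S_sq_add_S_sq R (n - 2))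
  rw [show n - 2 + 1 = n - 1 by ring] at cassini
  simp only [eval_sub, eval_add, eval_mul, eval_pow, eval_X, eval_one] at cassini
  rw [zpow_eq_eval_chebyshev_S hM, zpow_eq_eval_chebyshev_S hN, htr]
  simp only [sub_mul, mul_sub, smul_mul_assoc, mul_smul_comm, one_mul, mul_one,
    trace_sub, trace_smul, trace_one, htr, Fintype.card_fin, smul_eq_mul]
  linear_combination 2 * cassini

theorem det_mul_inv_mul_inv_mul {n R : Type*} [Fintype n] [DecidableEq n] [CommRing R]
    {A B : Matrix n n R} (hA : IsUnit A.det) (hB : IsUnit B.det) :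
    (B * A⁻¹ * B⁻¹ * A).det = 1 := by
  simp only [det_mul, det_nonsing_inv]
  calc B.det * Ring.inverse A.det * Ring.inverse B.det * A.det
      = (B.det * Ring.inverse B.det) * (Ring.inverse A.det * A.det) := by ring
    _ = 1 := by rw [Ring.mul_inverse_cancel _ hB, Ring.inverse_mul_cancel _ hA, one_mul]

end Matrix

section Riley

variable {K : Type*} [Field K] {s : K} (u : K)

/-- Riley's nonabelian representation of a two-bridge knot group sends the two meridians to
`rileyA s` and `rileyB s u`; `rileyW` and `rileyW'` are the images of `w` and its reverse. -/
abbrev rileyA (s : K) : Matrix (Fin 2) (Fin 2) K := !![s, 1; 0, s⁻¹]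

abbrev rileyB (s u : K) : Matrix (Fin 2) (Fin 2) K := !![s, 0; -u, s⁻¹]

noncomputable abbrev rileyW (s u : K) : Matrix (Fin 2) (Fin 2) K :=
  rileyB s u * (rileyA s)⁻¹ * (rileyB s u)⁻¹ * rileyA s

noncomputable abbrev rileyW' (s u : K) : Matrix (Fin 2) (Fin 2) K :=
  rileyA s * (rileyB s u)⁻¹ * (rileyA s)⁻¹ * rileyB s u

theorem inv_rileyA (hs : s ≠ 0) : (rileyA s)⁻¹ = !![s⁻¹, -1; 0, s] :=
  inv_eq_right_inv <| by simp [one_fin_two, hs]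

theorem inv_rileyB (hs : s ≠ 0) : (rileyB s u)⁻¹ = !![s⁻¹, 0; u, s] :=
  inv_eq_right_inv <| by simp [one_fin_two, hs]; ring

theorem det_rileyW (hs : s ≠ 0) : (rileyW s u).det = 1 :=
  det_mul_inv_mul_inv_mul (by simp [hs]) (by simp [hs])

theorem det_rileyW' (hs : s ≠ 0) : (rileyW' s u).det = 1 :=
  det_mul_inv_mul_inv_mul (by simp [hs]) (by simp [hs])

theorem trace_rileyW (hs : s ≠ 0) :
    (rileyW s u).trace = 2 + (2 - s ^ 2 - s⁻¹ ^ 2) * u + u ^ 2 := by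
  rw [rileyW, inv_rileyA hs, inv_rileyB u hs]
  simp [trace_fin_two_of]
  field_simp
  ring

theorem trace_rileyW' (hs : s ≠ 0) :
    (rileyW' s u).trace = 2 + (2 - s ^ 2 - s⁻¹ ^ 2) * u + u ^ 2 := by
  rw [rileyW', inv_rileyA hs, inv_rileyB u hs]
  simp [trace_fin_two_of]
  field_simp
  ring

theorem trace_rileyW'_mul_rileyW (hs : s ≠ 0) :
    (rileyW' s u * rileyW s u).trace =
      2 + u ^ 2 * (s ^ 2 + s⁻¹ ^ 2 + 2) * (s ^ 2 + s⁻¹ ^ 2 - 2 - u) := by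
  rw [rileyW, rileyW', inv_rileyA hs, inv_rileyB u hs]
  simp [trace_fin_two_of]
  field_simp
  ring

end Riley

/-- Let `s, u ∈ ℂ` with `s ≠ 0`, let `A = !![s, 1; 0, s⁻¹]`, `B = !![s, 0; -u, s⁻¹]`,
`W = B * A⁻¹ * B⁻¹ * A`, `W' = A * B⁻¹ * A⁻¹ * B`, and `z = 2 + (2 - s² - s⁻²)u + u²`.
Then for every integer `n`, the trace of `(W')^n * W^n` (the matrix of the canonical
longitude of the twist knot `J(2,2n)`) equals
`2 + u²(s² + s⁻² + 2)(s² + s⁻² - 2 - u) * S (n-1)²`, where `S` denotes the Chebyshev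
polynomials of the second kind evaluated at `z`. -/
theorem trace_longitude_twist_knot (s u z : ℂ) (hs : s ≠ 0)
    (hz : z = 2 + (2 - s ^ 2 - s⁻¹ ^ 2) * u + u ^ 2)
    (S : ℤ → ℂ) (hS0 : S 0 = 1) (hS1 : S 1 = z)
    (hSrec : ∀ k : ℤ, S k = z * S (k - 1) - S (k - 2))
    (A B W W' : Matrix (Fin 2) (Fin 2) ℂ)
    (hA : A = !![s, 1; 0, s⁻¹]) (hB : B = !![s, 0; -u, s⁻¹])
    (hW : W = B * A⁻¹ * B⁻¹ * A) (hW' : W' = A * B⁻¹ * A⁻¹ * B) :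
    ∀ n : ℤ, (W' ^ n * W ^ n).trace =
      2 + u ^ 2 * (s ^ 2 + s⁻¹ ^ 2 + 2) * (s ^ 2 + s⁻¹ ^ 2 - 2 - u) *
        (S (n - 1)) ^ 2 := by
  subst hA hB hW hW'
  intro n
  rw [trace_zpow_mul_zpow (det_rileyW u hs) (det_rileyW' u hs)
    ((trace_rileyW' u hs).trans (trace_rileyW u hs).symm), trace_rileyW'_mul_rileyW u hs,
    trace_rileyW u hs, ← hz, ← Chebyshev.eq_eval_S_of_recurrence hS0 hS1 hSrec]
  ring
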